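/- For 0 < α < 1, every nontrivial real solution of y'(t) = -y(αt) has an infinity of positive zeros; equivalently, E_α has infinitely many negative real zeros. -/

import Mathlib

/-- The exponent-like function `E_α`. -/
noncomputable def Ea (α : ℝ) (x : ℝ) : ℝ :=
  ∑' n : ℕ, α ^ (n * (n - 1) / 2) * x ^ n / (n.factorial : ℝ)


/-- Key comparison lemma: no eventually-positive solution. -/
lemma key_lemma (α : ℝ) (hα : 0 < α) (hα1 : α < 1) (y : ℝ → ℝ)
    (hy : ∀ t : ℝ, HasDerivAt y (-(y (α * t))) t) (T : ℝ) (hT : 0 < T)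
    (hpos : ∀ t, T < t → 0 < y t) : False := by
  have hcont : Continuous y := by
    apply continuous_iff_continuousAt.2
    exact fun t => (hy t).differentiableAt.continuousAt
  have hα' : α ≠ 0 := ne_of_gt hα
  have h1a : 0 < 1 - α := by linarith
  have hTS : T < T / α := by
    rw [lt_div_iff₀ hα]; nlinarith
  have hanti : StrictAntiOn y (Set.Ici (T / α)) := by
    apply strictAntiOn_of_deriv_neg (convex_Ici _) hcont.continuousOn
    intro x hx
    rw [interior_Ici] at hx
    rw [(hy x).deriv]
    have hx' : T / α < x := hx
    have : T < α * x := by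
      rw [div_lt_iff₀ hα] at hx'
      nlinarith
    linarith [hpos _ this]
  obtain ⟨t, ht1, ht2⟩ : ∃ t : ℝ, T / α ^ 2 < t ∧ α / (1 - α) < t :=
    ⟨max (T / α ^ 2) (α / (1 - α)) + 1,
      by linarith [le_max_left (T / α ^ 2) (α / (1 - α))],
      by linarith [le_max_right (T / α ^ 2) (α / (1 - α))]⟩
  have htpos : 0 < t := lt_of_le_of_lt (div_nonneg hα.le h1a.le) ht2
  have hSt : T / α < t := by
    calc T / α ≤ T / α ^ 2 := by
          apply div_le_div_of_nonneg_left (le_of_lt hT) (by positivity)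
          nlinarith
      _ < t := ht1
  have hTt : T < t := lt_trans hTS hSt
  have htb : t < t / α := by
    rw [lt_div_iff₀ hα]; nlinarith
  have hint : IntervalIntegrable (fun s => -(y (α * s))) MeasureTheory.volume t (t / α) :=
    (Continuous.neg (hcont.comp (continuous_const.mul continuous_id))).intervalIntegrable _ _
  have hFTC : ∫ s in t..(t / α), -(y (α * s)) = y (t / α) - y t :=
    intervalIntegral.integral_eq_sub_of_hasDerivAt (fun s _ => hy s) hint
  have hbound : ∫ s in t..(t / α), -(y (α * s)) ≤ ∫ s in t..(t / α), -(y t) := by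
    apply intervalIntegral.integral_mono_on (le_of_lt htb) hint intervalIntegrable_const
    intro s hs
    have hs1 : t ≤ s := hs.1
    have hs2 : s ≤ t / α := hs.2
    have hmem1 : α * s ∈ Set.Ici (T / α) := by
      rw [Set.mem_Ici]
      have h1 : T / α ≤ α * t := by
        rw [div_le_iff₀ hα]
        rw [div_lt_iff₀ (by positivity : (0:ℝ) < α ^ 2)] at ht1
        nlinarith
      nlinarith [mul_le_mul_of_nonneg_left hs1 hα.le]
    have hmem2 : t ∈ Set.Ici (T / α) := Set.mem_Ici.2 (le_of_lt hSt)
    have hle : α * s ≤ t := by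
      rw [le_div_iff₀ hα] at hs2
      nlinarith
    have := hanti.antitoneOn hmem1 hmem2 hle
    linarith
  have hconst : ∫ s in t..(t / α), -(y t) = (t / α - t) * (-(y t)) := by
    rw [intervalIntegral.integral_const]; simp [smul_eq_mul]
  have hyb : 0 < y (t / α) := hpos _ (lt_trans hTt htb)
  have hyt : 0 < y t := hpos t hTt
  have hgap : 1 < t / α - t := by
    rw [div_lt_iff₀ h1a] at ht2
    rw [lt_sub_iff_add_lt, lt_div_iff₀ hα]
    nlinarith
  nlinarith [hFTC, hbound, hconst, mul_pos hyt (by linarith : (0:ℝ) < t / α - t - 1)]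

lemma part1 (α : ℝ) (hα : 0 < α) (hα1 : α < 1) (y : ℝ → ℝ)
    (hy : ∀ t : ℝ, HasDerivAt y (-(y (α * t))) t) :
    {t : ℝ | 0 < t ∧ y t = 0}.Infinite := by
  by_contra hfin
  rw [Set.not_infinite] at hfin
  obtain ⟨C, hC⟩ := hfin.bddAbove
  set T := max C 1 with hTdef
  have hT1 : (1:ℝ) ≤ T := le_max_right C 1
  have hTpos : (0:ℝ) < T := lt_of_lt_of_le one_pos hT1
  have hcont : Continuous y := by
    apply continuous_iff_continuousAt.2
    exact fun t => (hy t).differentiableAt.continuousAt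
  have hnz : ∀ t, T < t → y t ≠ 0 := by
    intro t ht h0
    have h1 : t ∈ {t : ℝ | 0 < t ∧ y t = 0} := ⟨lt_trans hTpos ht, h0⟩
    have := hC h1
    have : C ≤ T := le_max_left C 1
    linarith [hC h1]
  have hsign : (∀ t, T < t → 0 < y t) ∨ (∀ t, T < t → y t < 0) := by
    by_contra h
    push_neg at h
    obtain ⟨⟨t1, ht1, h1⟩, ⟨t2, ht2, h2⟩⟩ := h
    have h1' : y t1 < 0 := lt_of_le_of_ne h1 (hnz t1 ht1)
    have h2' : 0 < y t2 := lt_of_le_of_ne h2 (Ne.symm (hnz t2 ht2))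
    have hzero : (0:ℝ) ∈ Set.uIcc (y t1) (y t2) :=
      Set.mem_uIcc.2 (Or.inl ⟨le_of_lt h1', le_of_lt h2'⟩)
    obtain ⟨c, hc, hc0⟩ := intermediate_value_uIcc (hcont.continuousOn (s := Set.uIcc t1 t2)) hzero
    have hcl : t1 ⊓ t2 ≤ c := hc.1
    have : T < c := lt_of_lt_of_le (lt_min ht1 ht2) hcl
    exact hnz c this hc0
  rcases hsign with hpos | hneg
  · exact key_lemma α hα hα1 y hy T hTpos hpos
  · refine key_lemma α hα hα1 (fun t => -y t) ?_ T hTpos ?_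
    · intro t
      have := (hy t).neg
      exact this
    · intro t ht
      simpa using hneg t ht

lemma tri_succ (n : ℕ) : (n + 1) * ((n + 1) - 1) / 2 = n * (n - 1) / 2 + n := by
  have h1 : (n + 1) * ((n + 1) - 1) / 2 = (n + 1).choose 2 := by
    rw [Nat.choose_two_right]
  have h2 : n * (n - 1) / 2 = n.choose 2 := (Nat.choose_two_right n).symm
  rw [h1, h2, Nat.choose_succ_succ, Nat.choose_one_right, Nat.add_comm]

lemma Ea_summable (α : ℝ) (hα : 0 < α) (hα1 : α < 1) (x : ℝ) :
    Summable (fun n : ℕ => α ^ (n * (n - 1) / 2) * x ^ n / (n.factorial : ℝ)) := by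
  apply Summable.of_norm
  apply Summable.of_nonneg_of_le (fun n => norm_nonneg _)
    (fun n => ?_) (Real.summable_pow_div_factorial |x|)
  rw [Real.norm_eq_abs, abs_div, abs_mul, abs_pow, abs_pow, abs_of_pos hα, Nat.abs_cast]
  calc α ^ (n * (n - 1) / 2) * |x| ^ n / (n.factorial : ℝ)
      ≤ 1 * |x| ^ n / (n.factorial : ℝ) := by
        gcongr
        exact pow_le_one₀ hα.le hα1.le
    _ = |x| ^ n / (n.factorial : ℝ) := by ring

lemma deriv_summable (α : ℝ) (hα : 0 < α) (hα1 : α < 1) (x : ℝ) :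
    Summable (fun n : ℕ =>
      α ^ (n * (n - 1) / 2) * ((n : ℝ) * x ^ (n - 1)) / (n.factorial : ℝ)) := by
  rw [← summable_nat_add_iff 1]
  apply Summable.congr (Ea_summable α hα hα1 (α * x))
  intro n
  rw [tri_succ, pow_add, Nat.add_sub_cancel, Nat.factorial_succ, mul_pow]
  push_cast
  have h1 : (0:ℝ) < (n.factorial : ℝ) := by positivity
  field_simp

lemma Ea_deriv_eq (α : ℝ) (hα : 0 < α) (hα1 : α < 1) (x : ℝ)
    (hsum : Summable (fun n : ℕ =>
      α ^ (n * (n - 1) / 2) * ((n : ℝ) * x ^ (n - 1)) / (n.factorial : ℝ))) :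
    (∑' n : ℕ, α ^ (n * (n - 1) / 2) * ((n : ℝ) * x ^ (n - 1)) / (n.factorial : ℝ))
      = Ea α (α * x) := by
  rw [Ea, Summable.tsum_eq_zero_add hsum]
  simp only [Nat.cast_zero, zero_mul, mul_zero, zero_div, zero_add]
  apply tsum_congr
  intro n
  rw [tri_succ, pow_add, Nat.add_sub_cancel, Nat.factorial_succ, mul_pow]
  push_cast
  field_simp

lemma Ea_hasDerivAt (α : ℝ) (hα : 0 < α) (hα1 : α < 1) (x : ℝ) :
    HasDerivAt (Ea α) (Ea α (α * x)) x := by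
  set R := |x| + 1 with hR
  have hRpos : 0 < R := by positivity
  have hxR : x ∈ Set.Ioo (-R) R := by
    constructor <;> cases abs_cases x <;> simp_all <;> linarith
  have h0mem : (0:ℝ) ∈ Set.Ioo (-R) R := Set.mem_Ioo.2 ⟨by linarith, by linarith⟩
  have hu : Summable (fun n : ℕ => (n : ℝ) * R ^ (n - 1) / (n.factorial : ℝ)) := by
    rw [← summable_nat_add_iff 1]
    have : (fun n : ℕ => ((n+1 : ℕ) : ℝ) * R ^ ((n+1) - 1) / (((n+1).factorial : ℕ) : ℝ))
        = fun n : ℕ => R ^ n / (n.factorial : ℝ) := by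
      funext n
      rw [Nat.add_sub_cancel, Nat.factorial_succ]
      push_cast
      have h1 : (0:ℝ) < (n.factorial : ℝ) := by positivity
      field_simp
    rw [this]
    exact Real.summable_pow_div_factorial R
  have hg : ∀ (n : ℕ) (z : ℝ), z ∈ Set.Ioo (-R) R →
      HasDerivAt (fun z : ℝ => α ^ (n * (n - 1) / 2) * z ^ n / (n.factorial : ℝ))
        (α ^ (n * (n - 1) / 2) * ((n : ℝ) * z ^ (n - 1)) / (n.factorial : ℝ)) z := by
    intro n z _
    exact ((hasDerivAt_pow n z).const_mul (α ^ (n * (n - 1) / 2))).div_const (n.factorial : ℝ)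
  have hg' : ∀ (n : ℕ) (z : ℝ), z ∈ Set.Ioo (-R) R →
      ‖α ^ (n * (n - 1) / 2) * ((n : ℝ) * z ^ (n - 1)) / (n.factorial : ℝ)‖
        ≤ (n : ℝ) * R ^ (n - 1) / (n.factorial : ℝ) := by
    intro n z hz
    have hz' : |z| ≤ R := by
      rw [abs_le]; exact ⟨le_of_lt hz.1, le_of_lt hz.2⟩
    rw [Real.norm_eq_abs, abs_div, abs_mul, abs_mul, abs_pow, abs_of_pos hα, Nat.abs_cast,
      Nat.abs_cast, abs_pow]
    calc α ^ (n * (n - 1) / 2) * ((n : ℝ) * |z| ^ (n - 1)) / (n.factorial : ℝ)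
        ≤ 1 * ((n : ℝ) * R ^ (n - 1)) / (n.factorial : ℝ) := by
          gcongr
          all_goals first
            | exact pow_le_one₀ hα.le hα1.le
            | exact abs_nonneg z
            | exact hz'
      _ = (n : ℝ) * R ^ (n - 1) / (n.factorial : ℝ) := by ring
  have key := hasDerivAt_tsum_of_isPreconnected hu isOpen_Ioo
    (convex_Ioo (-R) R).isPreconnected hg hg' h0mem (Ea_summable α hα hα1 0) hxR
  rw [show (fun z => ∑' n : ℕ, α ^ (n * (n - 1) / 2) * z ^ n / (n.factorial : ℝ)) = Ea α
      from rfl] at key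
  rwa [Ea_deriv_eq α hα hα1 x (deriv_summable α hα hα1 x)] at key

lemma Ea_zero (α : ℝ) : Ea α 0 = 1 := by
  rw [Ea]
  rw [tsum_eq_single 0 (fun n hn => by
    rw [zero_pow hn]
    simp)]
  norm_num

/-- (Morris–Feldstein–Bowen–Hahn) For `0 < α < 1`, every nontrivial real
solution of `y'(t) = -y(αt)` has an infinity of positive zeros; equivalently,
`E_α` has infinitely many negative real zeros. -/
theorem MFBH (α : ℝ) (hα : 0 < α) (hα1 : α < 1) :
    (∀ y : ℝ → ℝ,
      (∀ t : ℝ, HasDerivAt y (-(y (α * t))) t) → y ≠ 0 →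
      {t : ℝ | 0 < t ∧ y t = 0}.Infinite) ∧
    {x : ℝ | x < 0 ∧ Ea α x = 0}.Infinite := by
  constructor
  · intro y hy _
    exact part1 α hα hα1 y hy
  · set y : ℝ → ℝ := fun t => Ea α (-t) with hydef
    have hy : ∀ t : ℝ, HasDerivAt y (-(y (α * t))) t := by
      intro t
      have h1 : HasDerivAt (Ea α) (Ea α (α * (-t))) (-t) := Ea_hasDerivAt α hα hα1 (-t)
      have h2 : HasDerivAt (fun t : ℝ => -t) (-1 : ℝ) t := (hasDerivAt_id t).neg
      have h3 := HasDerivAt.comp t h1 h2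
      have : Ea α (α * (-t)) * (-1) = -(y (α * t)) := by
        rw [hydef]
        show Ea α (α * (-t)) * (-1) = -(Ea α (-(α * t)))
        rw [mul_neg_one, mul_neg]
      rw [this] at h3
      exact h3
    have hne : y ≠ 0 := by
      intro h
      have h0 : y 0 = 0 := by rw [h]; rfl
      rw [hydef] at h0
      simp only [neg_zero] at h0
      rw [Ea_zero] at h0
      norm_num at h0
    have hinf := part1 α hα hα1 y hy
    have himg : (fun t : ℝ => -t) '' {t : ℝ | 0 < t ∧ y t = 0} ⊆ {x : ℝ | x < 0 ∧ Ea α x = 0} := by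
      rintro x ⟨t, ⟨ht, hyt⟩, rfl⟩
      refine ⟨?_, ?_⟩
      · show -t < 0; linarith
      · show Ea α (-t) = 0; simpa [hydef] using hyt
    have : ((fun t : ℝ => -t) '' {t : ℝ | 0 < t ∧ y t = 0}).Infinite :=
      Set.Infinite.image (fun a _ b _ h => by linarith [neg_injective h]) hinf
    exact this.mono himg
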